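/- Let p be a prime, X a finite connected undirected graph, and α: E(X̃) → Z_p a voltage assignment. For each n ≥ 0, let α_n be the composition of α with the projection Z_p → Z/p^nZ and let X_n = X(Z/p^nZ, α_n). Then, for each fixed n ≥ 0, there exists a voltage assignment β: E(X̃_n) → p^nZ_p such that for every integer m ≥ n, X_m is isomorphic to the derived graph X_n(Z/p^{m−n}Z, β_m), where β_m is the composition of β with the projection p^nZ_p → p^nZ_p/p^mZ_p ≅ Z/p^{m−n}Z. -/

import Mathlib

/-! # Multigraphs, coverings, voltage assignments

Directed multigraphs (with loops and multiple edges allowed), undirected multigraphs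
(encoded à la Serre, as directed graphs with an edge-inversion), morphisms, coverings,
sheet numbers, deck transformation groups, Galois coverings, voltage assignments and
their derived graphs, connectedness, connected components, directed cycle graphs,
abstract (tectonic) craters and (tectonic) `l`-volcanoes. -/

/-- A directed multigraph. -/
structure Digraph' : Type 1 where
  V : Type
  E : Type
  src : E → V
  tgt : E → V

namespace Digraph'

variable (X : Digraph')

/-- Two vertices are adjacent if some edge goes from the first to the second. -/
def Adj (v w : X.V) : Prop := ∃ e : X.E, X.src e = v ∧ X.tgt e = w

/-- Two vertices lie in the same connected component (of the underlying
undirected graph). -/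
def Reach (v w : X.V) : Prop := Relation.EqvGen X.Adj v w

/-- A graph is connected if any two vertices lie in the same connected component. -/
def Connected : Prop := ∀ v w : X.V, X.Reach v w

/-- The set of vertices of the connected component containing `v`. -/
def ComponentSet (v : X.V) : Set X.V := {w | X.Reach v w}

/-- The number of connected components. -/
noncomputable def NumComponents : ℕ := Nat.card (Quot X.Adj)

/-- The subgraph generated by a set `S` of vertices: its edges are the edges of `X`
having both endpoints in `S`. -/
def induced (S : Set X.V) : Digraph' where
  V := S
  E := {e : X.E // X.src e ∈ S ∧ X.tgt e ∈ S}
  src e := ⟨X.src e.1, e.2.1⟩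
  tgt e := ⟨X.tgt e.1, e.2.2⟩

end Digraph'

/-- A morphism of directed multigraphs. -/
structure DigraphHom (Y X : Digraph') where
  onV : Y.V → X.V
  onE : Y.E → X.E
  map_src : ∀ e, X.src (onE e) = onV (Y.src e)
  map_tgt : ∀ e, X.tgt (onE e) = onV (Y.tgt e)

namespace DigraphHom

/-- The identity morphism. -/
def id (X : Digraph') : DigraphHom X X :=
  ⟨fun v => v, fun e => e, fun _ => rfl, fun _ => rfl⟩

/-- Composition of morphisms of directed multigraphs. -/
def comp {Z Y X : Digraph'} (g : DigraphHom Y X) (f : DigraphHom Z Y) :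
    DigraphHom Z X where
  onV := g.onV ∘ f.onV
  onE := g.onE ∘ f.onE
  map_src e := by simp only [Function.comp_apply, g.map_src, f.map_src]
  map_tgt e := by simp only [Function.comp_apply, g.map_tgt, f.map_tgt]

end DigraphHom

/-- A covering of directed multigraphs: a surjective morphism which is a local
bijection (it restricts to a bijection on the edges emanating from, respectively
arriving at, each given vertex). -/
def IsGraphCovering {Y X : Digraph'} (f : DigraphHom Y X) : Prop :=
  Function.Surjective f.onV ∧
    (∀ v : Y.V, Set.BijOn f.onE {e | Y.src e = v} {e | X.src e = f.onV v}) ∧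
    (∀ v : Y.V, Set.BijOn f.onE {e | Y.tgt e = v} {e | X.tgt e = f.onV v})

/-- A morphism of graphs is `d`-sheeted if every vertex downstairs has exactly `d`
preimages. -/
def IsSheeted {Y X : Digraph'} (f : DigraphHom Y X) (d : ℕ) : Prop :=
  ∀ x : X.V, Nat.card {y : Y.V // f.onV y = x} = d

/-- The group of deck transformations of `f : Y → X`: pairs of permutations of the
vertices and of the edges of `Y` which are compatible with the graph structure and
commute with `f`. -/
def DeckGroup {Y X : Digraph'} (f : DigraphHom Y X) :
    Subgroup (Equiv.Perm Y.V × Equiv.Perm Y.E) where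
  carrier := {σ | (∀ e, Y.src (σ.2 e) = σ.1 (Y.src e)) ∧
    (∀ e, Y.tgt (σ.2 e) = σ.1 (Y.tgt e)) ∧
    (∀ v, f.onV (σ.1 v) = f.onV v) ∧ (∀ e, f.onE (σ.2 e) = f.onE e)}
  one_mem' := ⟨fun _ => rfl, fun _ => rfl, fun _ => rfl, fun _ => rfl⟩
  mul_mem' := by
    rintro σ τ ⟨h1, h2, h3, h4⟩ ⟨g1, g2, g3, g4⟩
    exact ⟨fun e => by simp [Equiv.Perm.mul_apply, h1, g1],
      fun e => by simp [Equiv.Perm.mul_apply, h2, g2],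
      fun v => by simp [Equiv.Perm.mul_apply, h3, g3],
      fun e => by simp [Equiv.Perm.mul_apply, h4, g4]⟩
  inv_mem' := by
    rintro σ ⟨h1, h2, h3, h4⟩
    refine ⟨fun e => ?_, fun e => ?_, fun v => ?_, fun e => ?_⟩
    · have := h1 (σ.2⁻¹ e)
      simp only [Equiv.Perm.coe_inv, Equiv.apply_symm_apply] at this
      simp [Prod.fst_inv, Prod.snd_inv, this]
    · have := h2 (σ.2⁻¹ e)
      simp only [Equiv.Perm.coe_inv, Equiv.apply_symm_apply] at this
      simp [Prod.fst_inv, Prod.snd_inv, this]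
    · have := h3 (σ.1⁻¹ v)
      simp only [Equiv.Perm.coe_inv, Equiv.apply_symm_apply] at this
      simp [Prod.fst_inv, this]
    · have := h4 (σ.2⁻¹ e)
      simp only [Equiv.Perm.coe_inv, Equiv.apply_symm_apply] at this
      simp [Prod.snd_inv, this]

/-- A covering is Galois if it is `d`-sheeted where `d` is the number of its deck
transformations. -/
def IsGaloisCov {Y X : Digraph'} (f : DigraphHom Y X) : Prop :=
  IsGraphCovering f ∧ ∃ d : ℕ, IsSheeted f d ∧ Nat.card ↥(DeckGroup f) = d

/-- An isomorphism of directed multigraphs. -/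
structure DigraphIso (Y X : Digraph') where
  onV : Y.V ≃ X.V
  onE : Y.E ≃ X.E
  map_src : ∀ e, X.src (onE e) = onV (Y.src e)
  map_tgt : ∀ e, X.tgt (onE e) = onV (Y.tgt e)

/-- An undirected multigraph, encoded à la Serre: every undirected edge is recorded
as a pair of mutually inverse directed edges. -/
structure SerreGraph : Type 1 extends Digraph' where
  inv : E → E
  inv_inv : ∀ e, inv (inv e) = e
  src_inv : ∀ e, src (inv e) = tgt e
  tgt_inv : ∀ e, tgt (inv e) = src e

namespace SerreGraph

variable (X : SerreGraph)

/-- The subgraph of an undirected multigraph generated by a set `S` of vertices. -/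
def inducedClosed (S : Set X.V) : SerreGraph where
  V := S
  E := {e : X.E // X.src e ∈ S ∧ X.tgt e ∈ S}
  src e := ⟨X.src e.1, e.2.1⟩
  tgt e := ⟨X.tgt e.1, e.2.2⟩
  inv e := ⟨X.inv e.1, by rw [X.src_inv, X.tgt_inv]; exact ⟨e.2.2, e.2.1⟩⟩
  inv_inv e := Subtype.ext (X.inv_inv e.1)
  src_inv e := Subtype.ext (X.src_inv e.1)
  tgt_inv e := Subtype.ext (X.tgt_inv e.1)

/-- The connected component of a vertex, as an undirected multigraph. -/
def component (v : X.V) : SerreGraph :=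
  X.inducedClosed (X.toDigraph'.ComponentSet v)

end SerreGraph

/-- The undirected multigraph underlying a directed multigraph (the image of the
directed graph under the forgetful map). -/
def Digraph'.toSerre (X : Digraph') : SerreGraph where
  V := X.V
  E := X.E × Bool
  src e := if e.2 then X.src e.1 else X.tgt e.1
  tgt e := if e.2 then X.tgt e.1 else X.src e.1
  inv e := (e.1, !e.2)
  inv_inv e := by cases e with
    | mk a b => cases b <;> rfl
  src_inv e := by cases e with
    | mk a b => cases b <;> rfl
  tgt_inv e := by cases e with
    | mk a b => cases b <;> rfl

/-- A morphism of undirected multigraphs. -/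
structure SerreHom (Y X : SerreGraph) where
  onV : Y.V → X.V
  onE : Y.E → X.E
  map_src : ∀ e, X.src (onE e) = onV (Y.src e)
  map_tgt : ∀ e, X.tgt (onE e) = onV (Y.tgt e)
  map_inv : ∀ e, X.inv (onE e) = onE (Y.inv e)

/-- The underlying morphism of directed multigraphs. -/
def SerreHom.toDigraphHom {Y X : SerreGraph} (f : SerreHom Y X) :
    DigraphHom Y.toDigraph' X.toDigraph' :=
  ⟨f.onV, f.onE, f.map_src, f.map_tgt⟩

/-- An isomorphism of undirected multigraphs. -/
structure SerreIso (Y X : SerreGraph) where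
  onV : Y.V ≃ X.V
  onE : Y.E ≃ X.E
  map_src : ∀ e, X.src (onE e) = onV (Y.src e)
  map_tgt : ∀ e, X.tgt (onE e) = onV (Y.tgt e)
  map_inv : ∀ e, X.inv (onE e) = onE (Y.inv e)

/-- The group of deck transformations of a morphism of undirected multigraphs. -/
def SerreDeckGroup {Y X : SerreGraph} (f : SerreHom Y X) :
    Subgroup (Equiv.Perm Y.V × Equiv.Perm Y.E) where
  carrier := {σ | (∀ e, Y.src (σ.2 e) = σ.1 (Y.src e)) ∧
    (∀ e, Y.tgt (σ.2 e) = σ.1 (Y.tgt e)) ∧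
    (∀ e, Y.inv (σ.2 e) = σ.2 (Y.inv e)) ∧
    (∀ v, f.onV (σ.1 v) = f.onV v) ∧ (∀ e, f.onE (σ.2 e) = f.onE e)}
  one_mem' := ⟨fun _ => rfl, fun _ => rfl, fun _ => rfl, fun _ => rfl, fun _ => rfl⟩
  mul_mem' := by
    rintro σ τ ⟨h1, h2, h3, h4, h5⟩ ⟨g1, g2, g3, g4, g5⟩
    exact ⟨fun e => by simp [Equiv.Perm.mul_apply, h1, g1],
      fun e => by simp [Equiv.Perm.mul_apply, h2, g2],
      fun e => by simp [Equiv.Perm.mul_apply, h3, g3],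
      fun v => by simp [Equiv.Perm.mul_apply, h4, g4],
      fun e => by simp [Equiv.Perm.mul_apply, h5, g5]⟩
  inv_mem' := by
    rintro σ ⟨h1, h2, h3, h4, h5⟩
    refine ⟨fun e => ?_, fun e => ?_, fun e => ?_, fun v => ?_, fun e => ?_⟩
    · have := h1 (σ.2⁻¹ e)
      simp only [Equiv.Perm.coe_inv, Equiv.apply_symm_apply] at this
      simp [Prod.fst_inv, Prod.snd_inv, this]
    · have := h2 (σ.2⁻¹ e)
      simp only [Equiv.Perm.coe_inv, Equiv.apply_symm_apply] at this
      simp [Prod.fst_inv, Prod.snd_inv, this]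
    · have := h3 (σ.2⁻¹ e)
      simp only [Equiv.Perm.coe_inv, Equiv.apply_symm_apply] at this
      simp only [Prod.snd_inv]
      rw [this]
      simp
    · have := h4 (σ.1⁻¹ v)
      simp only [Equiv.Perm.coe_inv, Equiv.apply_symm_apply] at this
      simp [Prod.fst_inv, this]
    · have := h5 (σ.2⁻¹ e)
      simp only [Equiv.Perm.coe_inv, Equiv.apply_symm_apply] at this
      simp [Prod.snd_inv, this]

/-- A morphism of undirected multigraphs is a Galois covering if it is a covering
which is `d`-sheeted, where `d` is the number of its deck transformations. -/
def IsGaloisSerreCov {Y X : SerreGraph} (f : SerreHom Y X) : Prop :=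
  IsGraphCovering f.toDigraphHom ∧
    ∃ d : ℕ, IsSheeted f.toDigraphHom d ∧ Nat.card ↥(SerreDeckGroup f) = d
/-- A voltage assignment on an undirected multigraph, with values in a
(multiplicative) group `G`. -/
structure Voltage (X : SerreGraph) (G : Type) [Group G] where
  fn : X.E → G
  compat : ∀ e, fn (X.inv e) = (fn e)⁻¹

/-- The derived graph of a (multiplicative) voltage assignment. -/
def SerreGraph.derived (X : SerreGraph) (G : Type) [Group G] (α : Voltage X G) :
    SerreGraph where
  V := X.V × G
  E := X.E × G
  src e := (X.src e.1, e.2)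
  tgt e := (X.tgt e.1, e.2 * α.fn e.1)
  inv e := (X.inv e.1, e.2 * α.fn e.1)
  inv_inv e := by
    obtain ⟨a, g⟩ := e
    simp [α.compat, X.inv_inv, mul_assoc]
  src_inv e := by
    obtain ⟨a, g⟩ := e
    simp [X.src_inv]
  tgt_inv e := by
    obtain ⟨a, g⟩ := e
    simp [X.tgt_inv, α.compat, mul_assoc]

/-- A voltage assignment on an undirected multigraph, with values in an additive
group `G`. -/
structure AddVoltage (X : SerreGraph) (G : Type) [AddGroup G] where
  fn : X.E → G
  compat : ∀ e, fn (X.inv e) = -(fn e)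

/-- Post-composition of an additive voltage assignment with a map of additive
groups preserving negation. -/
def AddVoltage.comp {X : SerreGraph} {G H : Type} [AddGroup G] [AddGroup H]
    (α : AddVoltage X G) (f : G → H) (hf : ∀ x, f (-x) = -(f x)) : AddVoltage X H :=
  ⟨fun e => f (α.fn e), fun e => by rw [α.compat, hf]⟩

/-- The derived graph of an additive voltage assignment. -/
def SerreGraph.derivedAdd (X : SerreGraph) (G : Type) [AddGroup G]
    (α : AddVoltage X G) : SerreGraph where
  V := X.V × G
  E := X.E × G
  src e := (X.src e.1, e.2)
  tgt e := (X.tgt e.1, e.2 + α.fn e.1)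
  inv e := (X.inv e.1, e.2 + α.fn e.1)
  inv_inv e := by
    obtain ⟨a, g⟩ := e
    simp [α.compat, X.inv_inv, add_assoc]
  src_inv e := by
    obtain ⟨a, g⟩ := e
    simp [X.src_inv]
  tgt_inv e := by
    obtain ⟨a, g⟩ := e
    simp [X.tgt_inv, α.compat, add_assoc]

/-- The derived graph `X_n = X(ℤ/pⁿℤ, αₙ)` of the reduction `αₙ` modulo `pⁿ` of a
`ℤₚ`-valued voltage assignment `α`. -/
noncomputable def Xlevel (p : ℕ) [Fact p.Prime] (X : SerreGraph) (α : AddVoltage X ℤ_[p])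
    (n : ℕ) : SerreGraph :=
  X.derivedAdd (ZMod (p ^ n))
    (α.comp (PadicInt.toZModPow n) (fun x => by simp [map_neg]))

/-! A `p`-adic integer `x` splits as `x = s(x mod pⁿ) + pⁿ · (x div pⁿ)`, where `s` lifts a
residue to its representative in `[0, pⁿ)`. Reduced modulo `pᵐ`, this identifies `ℤ/pᵐℤ` with
`ℤ/pⁿℤ × ℤ/p^{m-n}ℤ`, and adding `α(e)` acts on the pair as
`(σ, k) ↦ (σ + αₙ(e), k + γ(e, σ))` with the carry `γ(e, σ) = (s σ + α(e)) div pⁿ`.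
Transporting the vertices and edges of `Xₘ` along this bijection gives the isomorphism
`Xₘ ≅ Xₙ(ℤ/p^{m-n}ℤ, γ mod p^{m-n})`. -/

namespace SerreGraph

def derivedAddIsoOfEquiv (X : SerreGraph) {G H K : Type} [AddGroup G] [AddGroup H]
    [AddGroup K] {α : AddVoltage X G} {a : AddVoltage X H}
    {c : AddVoltage (X.derivedAdd H a) K} (f : G ≃ H × K)
    (hf : ∀ g e, f (g + α.fn e) = ((f g).1 + a.fn e, (f g).2 + c.fn (e, (f g).1))) :
    SerreIso (X.derivedAdd G α) ((X.derivedAdd H a).derivedAdd K c) where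
  onV := ((Equiv.refl X.V).prodCongr f).trans (Equiv.prodAssoc _ _ _).symm
  onE := ((Equiv.refl X.E).prodCongr f).trans (Equiv.prodAssoc _ _ _).symm
  map_src _ := rfl
  map_tgt := by
    rintro ⟨e, g⟩
    exact congrArg (fun y : H × K => ((X.tgt e, y.1), y.2)) (hf g e).symm
  map_inv := by
    rintro ⟨e, g⟩
    exact congrArg (fun y : H × K => ((X.inv e, y.1), y.2)) (hf g e).symm

end SerreGraph

namespace PadicInt

variable {p : ℕ} [Fact p.Prime]

theorem prime_pow_ne_zero (n : ℕ) : (p : ℤ_[p]) ^ n ≠ 0 :=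
  pow_ne_zero n (Nat.cast_ne_zero.2 (Fact.out : p.Prime).ne_zero)

theorem toZModPow_eq_iff_dvd (n : ℕ) (x y : ℤ_[p]) :
    toZModPow n x = toZModPow n y ↔ (p : ℤ_[p]) ^ n ∣ x - y := by
  rw [← sub_eq_zero, ← map_sub, ← RingHom.mem_ker, ker_toZModPow, Ideal.mem_span_singleton]

theorem toZModPow_eq_of_le {n m : ℕ} (h : n ≤ m) {x y : ℤ_[p]}
    (hxy : toZModPow m x = toZModPow m y) : toZModPow n x = toZModPow n y := by
  rw [toZModPow_eq_iff_dvd] at hxy ⊢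
  exact (pow_dvd_pow _ h).trans hxy

variable (p) in
noncomputable def liftZModPow (n : ℕ) (σ : ZMod (p ^ n)) : ℤ_[p] := (σ.val : ℤ_[p])

@[simp]
theorem toZModPow_liftZModPow (n : ℕ) (σ : ZMod (p ^ n)) :
    toZModPow n (liftZModPow p n σ) = σ := by
  rw [liftZModPow, map_natCast, ZMod.natCast_zmod_val]

/-- `(x - s(x mod pⁿ)) / pⁿ`, i.e. `x` with its first `n` digits dropped. -/
noncomputable def divPow (n : ℕ) (x : ℤ_[p]) : ℤ_[p] :=
  ((toZModPow_eq_iff_dvd n x (liftZModPow p n (toZModPow n x))).1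
    (toZModPow_liftZModPow n _).symm).choose

theorem liftZModPow_add_pow_mul_divPow (n : ℕ) (x : ℤ_[p]) :
    liftZModPow p n (toZModPow n x) + (p : ℤ_[p]) ^ n * divPow n x = x := by
  rw [divPow, ← Exists.choose_spec ((toZModPow_eq_iff_dvd n x _).1
    (toZModPow_liftZModPow n _).symm)]
  ring

theorem divPow_liftZModPow (n : ℕ) (σ : ZMod (p ^ n)) : divPow n (liftZModPow p n σ) = 0 := by
  have h := liftZModPow_add_pow_mul_divPow n (liftZModPow p n σ)
  rw [toZModPow_liftZModPow, add_eq_left] at h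
  exact (mul_eq_zero.1 h).resolve_left (prime_pow_ne_zero n)

theorem divPow_add (n : ℕ) (x y : ℤ_[p]) :
    divPow n (x + y) = divPow n x + divPow n (liftZModPow p n (toZModPow n x) + y) := by
  refine mul_left_cancel₀ (prime_pow_ne_zero n) ?_
  have hxy := liftZModPow_add_pow_mul_divPow n (x + y)
  have hx := liftZModPow_add_pow_mul_divPow n x
  have hsy := liftZModPow_add_pow_mul_divPow n (liftZModPow p n (toZModPow n x) + y)
  rw [map_add, toZModPow_liftZModPow, ← map_add] at hsy
  linear_combination hxy - hx - hsy

theorem sub_eq_pow_mul_sub_divPow {n : ℕ} {x y : ℤ_[p]} (h : toZModPow n x = toZModPow n y) :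
    x - y = (p : ℤ_[p]) ^ n * (divPow n x - divPow n y) := by
  linear_combination liftZModPow_add_pow_mul_divPow n y - liftZModPow_add_pow_mul_divPow n x
    + congrArg (liftZModPow p n) h

theorem toZModPow_eq_iff {n m : ℕ} (h : n ≤ m) (x y : ℤ_[p]) :
    toZModPow m x = toZModPow m y ↔
      toZModPow n x = toZModPow n y ∧
        toZModPow (m - n) (divPow n x) = toZModPow (m - n) (divPow n y) := by
  constructor
  · intro hm
    have hn := toZModPow_eq_of_le h hm
    refine ⟨hn, ?_⟩
    rw [toZModPow_eq_iff_dvd] at hm ⊢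
    rwa [sub_eq_pow_mul_sub_divPow hn, ← pow_mul_pow_sub _ h,
      mul_dvd_mul_iff_left (prime_pow_ne_zero n)] at hm
  · rintro ⟨hn, hq⟩
    rw [toZModPow_eq_iff_dvd] at hq ⊢
    rw [sub_eq_pow_mul_sub_divPow hn, ← pow_mul_pow_sub _ h]
    exact mul_dvd_mul_left _ hq

noncomputable def splitZModPow {n m : ℕ} (h : n ≤ m) :
    ZMod (p ^ m) ≃ ZMod (p ^ n) × ZMod (p ^ (m - n)) :=
  Equiv.ofBijective
    (fun τ => (toZModPow n (liftZModPow p m τ), toZModPow (m - n) (divPow n (liftZModPow p m τ))))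
    (by
      rw [Fintype.bijective_iff_injective_and_card]
      refine ⟨fun τ τ' hτ => ?_, ?_⟩
      · simpa using (toZModPow_eq_iff h _ _).2 (Prod.ext_iff.1 hτ)
      · rw [Fintype.card_prod, ZMod.card, ZMod.card, ZMod.card, pow_mul_pow_sub _ h])

theorem splitZModPow_toZModPow {n m : ℕ} (h : n ≤ m) (x : ℤ_[p]) :
    splitZModPow h (toZModPow m x) = (toZModPow n x, toZModPow (m - n) (divPow n x)) :=
  Prod.ext_iff.2 ((toZModPow_eq_iff h _ _).1 (toZModPow_liftZModPow m _))

end PadicInt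

open PadicInt

noncomputable def carryVoltage (p : ℕ) [Fact p.Prime] (X : SerreGraph) (α : AddVoltage X ℤ_[p])
    (n : ℕ) : AddVoltage (Xlevel p X α n) ℤ_[p] where
  fn ε := divPow n (liftZModPow p n ε.2 + α.fn ε.1)
  compat := by
    rintro ⟨e, σ⟩
    have h := divPow_add n (liftZModPow p n σ + α.fn e) (-α.fn e)
    rw [add_neg_cancel_right, divPow_liftZModPow, map_add, toZModPow_liftZModPow,
      ← sub_eq_add_neg] at h
    show divPow n (liftZModPow p n (σ + toZModPow n (α.fn e)) + α.fn (X.inv e)) = _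
    rw [α.compat, ← sub_eq_add_neg]
    linear_combination -h

/-- **Lemma (shifting the base of a `ℤₚ`-tower of derived graphs).**
Let `p` be a prime, `X` a finite connected undirected graph, and `α : E(X) → ℤₚ` a
voltage assignment.  For each `n ≥ 0` let `αₙ` be the composition of `α` with the
projection `ℤₚ → ℤ/pⁿℤ` and let `Xₙ = X(ℤ/pⁿℤ, αₙ)`.  Then for each fixed `n` there
is a voltage assignment `β : E(Xₙ) → pⁿℤₚ` (here `β = pⁿ • γ`, which guarantees that
it takes values in `pⁿℤₚ`) such that for every `m ≥ n`, the graph `Xₘ` is isomorphic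
to the derived graph `Xₙ(ℤ/p^{m-n}ℤ, βₘ)`, where `βₘ` is the composition of `β` with
the projection `pⁿℤₚ → pⁿℤₚ/pᵐℤₚ ≅ ℤ/p^{m-n}ℤ` (concretely, `βₘ = γ mod p^{m-n}`). -/
theorem shift_base_of_Zp_tower_of_derived_graphs
    (p : ℕ) [Fact p.Prime] (X : SerreGraph) (α : AddVoltage X ℤ_[p]) (n : ℕ) :
    ∃ β γ : AddVoltage (Xlevel p X α n) ℤ_[p],
      (∀ e, β.fn e = (p : ℤ_[p]) ^ n * γ.fn e) ∧
      ∀ m : ℕ, n ≤ m →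
        Nonempty (SerreIso (Xlevel p X α m)
          ((Xlevel p X α n).derivedAdd (ZMod (p ^ (m - n)))
            (γ.comp (PadicInt.toZModPow (m - n)) (fun x => by simp [map_neg])))) := by
  set γ := carryVoltage p X α n
  refine ⟨γ.comp (fun x => (p : ℤ_[p]) ^ n * x) (fun x => mul_neg _ x), γ, fun _ => rfl,
    fun m h => ⟨X.derivedAddIsoOfEquiv (splitZModPow h) fun τ e => ?_⟩⟩
  obtain ⟨x, rfl⟩ := ZMod.ringHom_surjective (toZModPow m) τ
  show splitZModPow h (toZModPow m x + toZModPow m (α.fn e)) = _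
  rw [← map_add, splitZModPow_toZModPow, splitZModPow_toZModPow, map_add, divPow_add, map_add]
  rfl
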